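/- (Kronecker) A monic integer polynomial f with f(0) ≠ 0 has Mahler measure 1 if and only if every root of f is a root of unity. -/

import Mathlib

open Polynomial

noncomputable def mahlerMeasure (f : Polynomial ℂ) : ℝ :=
  ‖f.leadingCoeff‖ * (f.roots.map (fun α => max ‖α‖ 1)).prod

lemma mahlerMeasure_eq_polynomial_mahlerMeasure (p : ℂ[X]) :
    _root_.mahlerMeasure p = p.mahlerMeasure := by
  simp only [_root_.mahlerMeasure, mahlerMeasure_eq_leadingCoeff_mul_prod_roots, max_comm]

lemma Polynomial.Monic.mahlerMeasure_eq_one_of_forall_pow_eq_one {p : ℂ[X]} (hp : p.Monic)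
    (h : ∀ α ∈ p.roots, ∃ k : ℕ, 0 < k ∧ α ^ k = 1) : p.mahlerMeasure = 1 := by
  rw [mahlerMeasure_eq_leadingCoeff_mul_prod_roots, hp.leadingCoeff, norm_one, one_mul]
  refine Multiset.prod_eq_one fun x hx => ?_
  obtain ⟨α, hα, rfl⟩ := Multiset.mem_map.mp hx
  obtain ⟨k, hk, hαk⟩ := h α hα
  simp [Complex.norm_eq_one_of_pow_eq_one hαk hk.ne']

/-- Kronecker's theorem: a monic integer polynomial with nonzero constant term has
Mahler measure 1 iff all of its (complex) roots are roots of unity. -/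
theorem kronecker (f : Polynomial ℤ) (hmonic : f.Monic) (h0 : f.eval 0 ≠ 0) :
    _root_.mahlerMeasure (f.map (Int.castRingHom ℂ)) = 1 ↔
      ∀ α ∈ (f.map (Int.castRingHom ℂ)).roots, ∃ k : ℕ, 0 < k ∧ α ^ k = 1 := by
  rw [mahlerMeasure_eq_polynomial_mahlerMeasure]
  refine ⟨fun h α hα => pow_eq_one_of_mahlerMeasure_eq_one h ?_ hα,
    (hmonic.map _).mahlerMeasure_eq_one_of_forall_pow_eq_one⟩
  -- Mathlib's Kronecker theorem covers nonzero roots only; `h0` excludes the root `0`.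
  rintro rfl
  simp_all [mem_roots', eval_map, coeff_zero_eq_eval_zero]
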